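/- The 10-vertex graph formed by gluing a 6-vertex graph G₁ with Laplacian L₁ (as given) and a 4-vertex graph G₂ with Laplacian L₂ (as given) by a single bridge edge between vertex 2 of G₁ and vertex 7 (vertex 1 of G₂) has second-smallest Laplacian eigenvalue at most 1/6 + 1/4 = 5/12. -/

import Mathlib

open Matrix

/-- The list of eigenvalues of a Hermitian matrix, sorted in increasing order. -/
noncomputable def eigList {V : Type} [Fintype V] [DecidableEq V]
    {M : Matrix V V ℝ} (h : M.IsHermitian) : List ℝ :=
  Multiset.sort (Finset.univ.val.map h.eigenvalues) (· ≤ ·)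

/-- The second-smallest eigenvalue (with multiplicity) of a Hermitian matrix. -/
noncomputable def lambda2 {V : Type} [Fintype V] [DecidableEq V]
    {M : Matrix V V ℝ} (h : M.IsHermitian) : ℝ :=
  (eigList h).getD 1 0

/-- The 10-vertex graph from Example 2 of the paper: a 6-vertex graph `G₁` (vertices `0,…,5`)
and a 4-vertex graph `G₂` (vertices `6,…,9`) glued by the single bridge edge `{1, 6}`. -/
noncomputable def example2Graph : SimpleGraph (Fin 10) :=
  SimpleGraph.fromEdgeSet
    {s(0, 1), s(1, 2), s(2, 3), s(3, 4), s(0, 4), s(0, 5), s(2, 5), s(3, 5),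
     s(6, 7), s(7, 8), s(6, 9), s(7, 9), s(1, 6)}

noncomputable instance : DecidableRel example2Graph.Adj := Classical.decRel _

section Spectral

variable {n : ℕ} {A : Matrix (Fin n) (Fin n) ℝ} (hA : A.IsHermitian)

noncomputable def coord (hA : A.IsHermitian) (x : Fin n → ℝ) : Fin n → ℝ :=
  fun i => hA.eigenvectorBasis.repr ((WithLp.linearEquiv 2 ℝ (Fin n → ℝ)).symm x) i

lemma dot_sum (x : Fin n → ℝ) (f : Fin n → Fin n → ℝ) :
    x ⬝ᵥ (∑ i, f i) = ∑ i, x ⬝ᵥ f i := by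
  simp only [dotProduct, Finset.sum_apply, Finset.mul_sum]
  exact Finset.sum_comm

lemma coord_dot (x : Fin n → ℝ) (i : Fin n) :
    x ⬝ᵥ ⇑(hA.eigenvectorBasis i) = coord hA x i := by
  simp only [coord, OrthonormalBasis.repr_apply_apply, PiLp.inner_apply, RCLike.inner_apply,
    starRingEnd_apply, star_trivial, dotProduct]
  exact Finset.sum_congr rfl fun j _ => rfl

lemma eigen_expand (y : Fin n → ℝ) :
    y = ∑ i, coord hA y i • ⇑(hA.eigenvectorBasis i) := by
  set e := WithLp.linearEquiv 2 ℝ (Fin n → ℝ)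
  have h := hA.eigenvectorBasis.sum_repr (e.symm y)
  have h2 : (∑ i, e (hA.eigenvectorBasis.repr (e.symm y) i • hA.eigenvectorBasis i)) = y := by
    rw [← map_sum, h]
    exact e.apply_symm_apply y
  conv_lhs => rw [← h2]
  refine Finset.sum_congr rfl fun i _ => ?_
  rw [_root_.map_smul]
  rfl

lemma quad_form_eq (x y : Fin n → ℝ) :
    x ⬝ᵥ (A *ᵥ y) = ∑ i, hA.eigenvalues i * coord hA x i * coord hA y i := by
  have h1 : A *ᵥ y = ∑ i, coord hA y i • (hA.eigenvalues i • ⇑(hA.eigenvectorBasis i)) := by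
    conv_lhs => rw [eigen_expand hA y]
    rw [show A *ᵥ (∑ i, coord hA y i • ⇑(hA.eigenvectorBasis i))
        = A.mulVecLin (∑ i, coord hA y i • ⇑(hA.eigenvectorBasis i)) from rfl, map_sum]
    refine Finset.sum_congr rfl fun i _ => ?_
    rw [_root_.map_smul, Matrix.mulVecLin_apply, hA.mulVec_eigenvectorBasis]
  rw [h1, dot_sum]
  refine Finset.sum_congr rfl fun i _ => ?_
  rw [dotProduct_smul, dotProduct_smul, coord_dot hA x i, smul_eq_mul, smul_eq_mul]
  ring

lemma parseval (x y : Fin n → ℝ) :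
    x ⬝ᵥ y = ∑ i, coord hA x i * coord hA y i := by
  set e := WithLp.linearEquiv 2 ℝ (Fin n → ℝ)
  have h := hA.eigenvectorBasis.repr.inner_map_map (e.symm x) (e.symm y)
  simp only [PiLp.inner_apply, RCLike.inner_apply, starRingEnd_apply, star_trivial] at h
  calc x ⬝ᵥ y = ∑ i, (e.symm x) i * (e.symm y) i := rfl
  _ = ∑ i, coord hA x i * coord hA y i := by
    rw [Finset.sum_congr rfl fun i _ => mul_comm ((e.symm x) i) ((e.symm y) i), ← h]
    exact Finset.sum_congr rfl fun i _ => mul_comm _ _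

lemma coord_eq_zero_iff (x : Fin n → ℝ) : coord hA x = 0 ↔ x = 0 := by
  constructor
  · intro h
    have h2 : hA.eigenvectorBasis.repr ((WithLp.linearEquiv 2 ℝ (Fin n → ℝ)).symm x) = 0 := by
      ext i; exact congrFun h i
    have h3 : (WithLp.linearEquiv 2 ℝ (Fin n → ℝ)).symm x = 0 :=
      (map_eq_zero_iff _ hA.eigenvectorBasis.repr.injective).mp h2
    exact (map_eq_zero_iff _ (WithLp.linearEquiv 2 ℝ (Fin n → ℝ)).symm.injective).mp h3
  · rintro rfl
    ext i
    simp [coord]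

lemma coord_sub_smul (a b : ℝ) (x y : Fin n → ℝ) (i : Fin n) :
    coord hA (a • x - b • y) i = a * coord hA x i - b * coord hA y i := by
  simp only [coord, map_sub, _root_.map_smul]
  rfl

end Spectral

lemma lambda2_le_of_two {V : Type} [Fintype V] [DecidableEq V]
    {M : Matrix V V ℝ} (h : M.IsHermitian) {c : ℝ} {i j : V} (hij : i ≠ j)
    (hi : h.eigenvalues i ≤ c) (hj : h.eigenvalues j ≤ c) : lambda2 h ≤ c := by
  by_contra hlt
  push_neg at hlt
  have hcount : 2 ≤ Multiset.countP (· ≤ c) (Finset.univ.val.map h.eigenvalues) := by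
    rw [Multiset.countP_map]
    have hsub : ({i, j} : Finset V) ⊆ Finset.univ.filter (fun a => h.eigenvalues a ≤ c) := by
      intro a ha
      simp only [Finset.mem_insert, Finset.mem_singleton] at ha
      rcases ha with rfl | rfl <;> simp [hi, hj]
    have h2 : ({i, j} : Finset V).card = 2 := by
      rw [Finset.card_insert_of_notMem (by simpa), Finset.card_singleton]
    calc 2 = ({i, j} : Finset V).card := h2.symm
      _ ≤ (Finset.univ.filter (fun a => h.eigenvalues a ≤ c)).card := Finset.card_le_card hsub
      _ = Multiset.card (Multiset.filter (fun a => h.eigenvalues a ≤ c) Finset.univ.val) := rfl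
  have hsorted : (eigList h).Pairwise (· ≤ ·) := Multiset.pairwise_sort _ _
  have hperm : ((eigList h : List ℝ) : Multiset ℝ) = Finset.univ.val.map h.eigenvalues :=
    Multiset.sort_eq _ _
  rw [← hperm] at hcount
  -- now analyze the sorted list
  have : Multiset.countP (· ≤ c) ((eigList h : List ℝ) : Multiset ℝ) ≤ 1 := by
    rcases hl : eigList h with _ | ⟨a, _ | ⟨b, t⟩⟩
    · simp
    · have : Multiset.countP (fun x => x ≤ c) ({a} : Multiset ℝ)
          = Multiset.countP (fun x => x ≤ c) (0 : Multiset ℝ) + (if a ≤ c then 1 else 0) := by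
        rw [← Multiset.cons_zero, Multiset.countP_cons]
      rw [Multiset.coe_singleton, this]
      split <;> simp
    · have hb : lambda2 h = b := by rw [lambda2, hl]; rfl
      rw [hl] at hsorted
      have hbt : ∀ x ∈ (b :: t), ¬ (x ≤ c) := by
        intro x hx
        rcases List.mem_cons.mp hx with rfl | hx'
        · exact fun hxc => absurd (hb ▸ hxc) (not_le_of_gt hlt)
        · have hbx : b ≤ x := (List.pairwise_cons.mp (List.pairwise_cons.mp hsorted).2).1 x hx'
          intro hxc
          exact absurd (hb ▸ (hbx.trans hxc)) (not_le_of_gt hlt)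
      have h0 : Multiset.countP (· ≤ c) ((b :: t : List ℝ) : Multiset ℝ) = 0 :=
        Multiset.countP_eq_zero.mpr (by simpa using hbt)
      calc Multiset.countP (· ≤ c) ((a :: b :: t : List ℝ) : Multiset ℝ)
          = Multiset.countP (· ≤ c) ((b :: t : List ℝ) : Multiset ℝ)
            + (if a ≤ c then 1 else 0) := by
            rw [← Multiset.cons_coe, Multiset.countP_cons]
        _ ≤ 0 + 1 := by rw [h0]; split <;> simp
        _ = 1 := by ring
  omega

section Main

variable {n : ℕ} {A : Matrix (Fin n) (Fin n) ℝ} (hA : A.IsHermitian)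

lemma rayleigh_gt {c : ℝ} (k : Fin n) (hk : ∀ i, i ≠ k → c < hA.eigenvalues i)
    {w : Fin n → ℝ} (hw : w ≠ 0) (hwk : coord hA w k = 0) :
    c * (w ⬝ᵥ w) < w ⬝ᵥ (A *ᵥ w) := by
  rw [quad_form_eq hA w w, parseval hA w w, Finset.mul_sum]
  apply Finset.sum_lt_sum
  · intro i _
    by_cases hik : i = k
    · subst hik; simp [hwk]
    · have h1 := hk i hik
      nlinarith [mul_self_nonneg (coord hA w i)]
  · obtain ⟨i, hi⟩ : ∃ i, coord hA w i ≠ 0 := by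
      by_contra hcon
      push_neg at hcon
      exact hw ((coord_eq_zero_iff hA w).mp (funext hcon))
    have hik : i ≠ k := fun he => hi (he ▸ hwk)
    refine ⟨i, Finset.mem_univ i, ?_⟩
    have h1 := hk i hik
    nlinarith [mul_self_pos.mpr hi]

lemma lambda2_le_rayleigh {c : ℝ} (hc : 0 ≤ c) (u v : Fin n → ℝ)
    (hu : u ≠ 0) (hv : v ≠ 0) (hAu : A *ᵥ u = 0) (huv : u ⬝ᵥ v = 0)
    (hR : v ⬝ᵥ (A *ᵥ v) ≤ c * (v ⬝ᵥ v)) : lambda2 hA ≤ c := by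
  by_contra hlt
  push_neg at hlt
  have hn : 0 < n := by
    rcases Nat.eq_zero_or_pos n with rfl | h
    · exact absurd (funext fun i : Fin 0 => absurd i.2 (by omega)) hu
    · exact h
  have hone : ∃ k : Fin n, ∀ i, i ≠ k → c < hA.eigenvalues i := by
    by_cases hS : ∃ k, hA.eigenvalues k ≤ c
    · obtain ⟨k, hkc⟩ := hS
      refine ⟨k, fun i hik => ?_⟩
      by_contra hic
      push_neg at hic
      exact absurd (lambda2_le_of_two hA hik hic hkc) (not_le_of_gt hlt)
    · push_neg at hS
      exact ⟨⟨0, hn⟩, fun i _ => hS i⟩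
  obtain ⟨k, hk⟩ := hone
  set a := coord hA u k with hadef
  set b := coord hA v k with hbdef
  set w : Fin n → ℝ := b • u - a • v with hwdef
  have hwk : coord hA w k = 0 := by
    rw [hwdef, coord_sub_smul, ← hadef, ← hbdef]; ring
  have hAt : Aᵀ = A := by
    rw [← Matrix.conjTranspose_eq_transpose_of_trivial]; exact hA
  have hsym : u ⬝ᵥ (A *ᵥ v) = 0 := by
    rw [Matrix.dotProduct_mulVec, ← Matrix.mulVec_transpose, hAt, hAu, zero_dotProduct]
  have hvu : v ⬝ᵥ u = 0 := by rw [dotProduct_comm]; exact huv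
  have hvpos : 0 < v ⬝ᵥ v := by
    rcases lt_or_eq_of_le (Finset.sum_nonneg fun i (_ : i ∈ Finset.univ) =>
      mul_self_nonneg (v i) : (0:ℝ) ≤ v ⬝ᵥ v) with h1 | h1
    · exact h1
    · exact absurd ((dotProduct_self_eq_zero).mp h1.symm) hv
  have hupos : 0 ≤ u ⬝ᵥ u :=
    Finset.sum_nonneg fun i _ => mul_self_nonneg (u i)
  by_cases hw0 : w = 0
  · have ha : a = 0 := by
      have h2 : v ⬝ᵥ w = b * (v ⬝ᵥ u) - a * (v ⬝ᵥ v) := by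
        rw [hwdef, dotProduct_sub, dotProduct_smul, dotProduct_smul,
          smul_eq_mul, smul_eq_mul]
      rw [hw0, dotProduct_zero, hvu, mul_zero] at h2
      have h3 : a * (v ⬝ᵥ v) = 0 := by linarith
      exact (mul_eq_zero.mp h3).resolve_right (ne_of_gt hvpos)
    have hak : coord hA u k = 0 := by rw [← hadef]; exact ha
    have hgt := rayleigh_gt hA k hk hu hak
    have h0 : u ⬝ᵥ (A *ᵥ u) = 0 := by rw [hAu, dotProduct_zero]
    nlinarith [mul_nonneg hc hupos]
  · have hgt := rayleigh_gt hA k hk hw0 hwk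
    have hAw : w ⬝ᵥ (A *ᵥ w) = a * a * (v ⬝ᵥ (A *ᵥ v)) := by
      rw [hwdef, Matrix.mulVec_sub, Matrix.mulVec_smul, Matrix.mulVec_smul, hAu, smul_zero]
      rw [sub_dotProduct, smul_dotProduct, smul_dotProduct,
        dotProduct_sub, dotProduct_sub, dotProduct_smul,
        dotProduct_smul, hsym]
      have hvAv : v ⬝ᵥ ((0 : Fin n → ℝ)) = 0 := dotProduct_zero v
      simp only [dotProduct_zero, smul_eq_mul]
      ring
    have hww : w ⬝ᵥ w = b * b * (u ⬝ᵥ u) + a * a * (v ⬝ᵥ v) := by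
      rw [hwdef, sub_dotProduct, smul_dotProduct, smul_dotProduct,
        dotProduct_sub, dotProduct_sub, dotProduct_smul,
        dotProduct_smul, dotProduct_smul, dotProduct_smul,
        huv, hvu]
      simp only [smul_eq_mul, mul_zero]
      ring
    nlinarith [mul_le_mul_of_nonneg_left hR (mul_self_nonneg a),
      mul_nonneg hc (mul_nonneg (mul_self_nonneg b) hupos)]

end Main


noncomputable def vtest : Fin 10 → ℝ := ![2, 2, 2, 2, 2, 2, -3, -3, -3, -3]

lemma vtest_dot_self : vtest ⬝ᵥ vtest = 60 := by
  norm_num [dotProduct, Fin.sum_univ_succ, vtest]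

lemma one_dot_vtest : (fun _ => (1 : ℝ)) ⬝ᵥ vtest = 0 := by
  norm_num [dotProduct, Fin.sum_univ_succ, vtest]

set_option maxHeartbeats 1000000 in
lemma vtest_quad : vtest ⬝ᵥ (example2Graph.lapMatrix ℝ *ᵥ vtest) = 25 := by
  rw [← Matrix.toLinearMap₂'_apply', SimpleGraph.lapMatrix_toLinearMap₂']
  simp only [example2Graph, SimpleGraph.fromEdgeSet_adj, Set.mem_insert_iff,
    Set.mem_singleton_iff, Fin.sum_univ_succ, Fin.sum_univ_zero, vtest]
  simp only [Sym2.eq_iff, Fin.ext_iff]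
  norm_num (config := { decide := true }) [Matrix.cons_val, Matrix.cons_val_two, Matrix.cons_val_succ, Matrix.tail_cons,
    Matrix.head_cons]

theorem stmt_14 :
    lambda2 (SimpleGraph.posSemidef_lapMatrix ℝ example2Graph).isHermitian ≤
      1 / 6 + 1 / 4 := by
  apply lambda2_le_rayleigh _ (by norm_num) (fun _ => (1 : ℝ)) vtest
  · intro h
    have h0 := congrFun h 0
    norm_num at h0
  · intro h
    have h0 := congrFun h 0
    simp only [vtest] at h0
    norm_num at h0
  · exact SimpleGraph.lapMatrix_mulVec_const_eq_zero example2Graph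
  · exact one_dot_vtest
  · rw [vtest_quad, vtest_dot_self]
    norm_num
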